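/- arXiv:math/9308203 — 2 statements merged into one kernel-verified Lean document; each statement's English description precedes it below -/
import Mathlib

section
/- If I is a quasinormal ideal on κ contained in the nonstationary ideal NS_κ, then I is normal. -/
open Set

namespace PaperIdeals

/-- Diagonal union of a family `X` indexed by a set `A` of ordinals. -/
def diagU (A : Set Ordinal.{0}) (X : Ordinal.{0} → Set Ordinal.{0}) : Set Ordinal.{0} :=
  {ξ | ∃ α < ξ, α ∈ A ∧ ξ ∈ X α}

/-- `X` is bounded below `κ`. -/
def BddIn (κ : Cardinal.{0}) (X : Set Ordinal.{0}) : Prop := ∃ θ < κ.ord, X ⊆ Iio θ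

/-- `J` is a `<κ`-complete ideal on `κ` containing all singletons,
closed under subsets and (finite and small) unions. -/
def IsIdeal (κ : Cardinal.{0}) (J : Set Ordinal.{0} → Prop) : Prop :=
  (∀ X, J X → X ⊆ Iio κ.ord) ∧
  (∀ X Y, J X → Y ⊆ X → J Y) ∧
  (∀ X Y, J X → J Y → J (X ∪ Y)) ∧
  (∀ ξ < κ.ord, J {ξ}) ∧
  (∀ θ : Ordinal.{0}, θ.card < κ → ∀ X : Ordinal.{0} → Set Ordinal.{0},
    (∀ α, J (X α)) → J (⋃ α ∈ Iio θ, X α))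

def Proper (κ : Cardinal.{0}) (J : Set Ordinal.{0} → Prop) : Prop := ¬ J (Iio κ.ord)

/-- The coideal `I⁺`. -/
def Pos (κ : Cardinal.{0}) (J : Set Ordinal.{0} → Prop) (X : Set Ordinal.{0}) : Prop :=
  X ⊆ Iio κ.ord ∧ ¬ J X

/-- The dual filter `I*`. -/
def Dual (κ : Cardinal.{0}) (J : Set Ordinal.{0} → Prop) (X : Set Ordinal.{0}) : Prop :=
  X ⊆ Iio κ.ord ∧ J (Iio κ.ord \ X)

/-- The restriction `I ↾ A`. -/
def restrict (κ : Cardinal.{0}) (J : Set Ordinal.{0} → Prop) (A : Set Ordinal.{0})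
    (X : Set Ordinal.{0}) : Prop :=
  X ⊆ Iio κ.ord ∧ J (X ∩ A)

/-- Pleasant: closed under diagonal unions indexed by sets in the ideal. -/
def Pleasant (J : Set Ordinal.{0} → Prop) : Prop :=
  ∀ A, J A → ∀ X : Ordinal.{0} → Set Ordinal.{0}, (∀ α, J (X α)) → J (diagU A X)

/-- Prepleasant: closed under diagonal unions of bounded sets indexed by sets in the ideal. -/
def Prepleasant (κ : Cardinal.{0}) (J : Set Ordinal.{0} → Prop) : Prop :=
  ∀ Q, J Q → ∀ B : Ordinal.{0} → Set Ordinal.{0}, (∀ α, BddIn κ (B α)) → J (diagU Q B)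

/-- Normal: closed under full `κ`-indexed diagonal unions. -/
def Normal (κ : Cardinal.{0}) (J : Set Ordinal.{0} → Prop) : Prop :=
  ∀ X : Ordinal.{0} → Set Ordinal.{0}, (∀ α, J (X α)) → J (diagU (Iio κ.ord) X)

/-- Quasinormal ideal. -/
def Quasinormal (κ : Cardinal.{0}) (J : Set Ordinal.{0} → Prop) : Prop :=
  ∀ X : Ordinal.{0} → Set Ordinal.{0}, (∀ α, J (X α)) →
    ∃ Q, Dual κ J Q ∧ J (diagU Q X)

/-- Club subset of `κ`: unbounded in `κ.ord` and closed under limits. -/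
def IsClubIn (κ : Cardinal.{0}) (C : Set Ordinal.{0}) : Prop :=
  C ⊆ Iio κ.ord ∧ (∀ α < κ.ord, ∃ β ∈ C, α < β) ∧
  (∀ δ < κ.ord, Order.IsSuccLimit δ → (∀ α < δ, ∃ β ∈ C, α < β ∧ β < δ) → δ ∈ C)

/-- Stationary subset of `κ`. -/
def StatIn (κ : Cardinal.{0}) (S : Set Ordinal.{0}) : Prop :=
  S ⊆ Iio κ.ord ∧ ∀ C, IsClubIn κ C → (S ∩ C).Nonempty

/-- The nonstationary ideal `NS κ`. -/
def NS (κ : Cardinal.{0}) (X : Set Ordinal.{0}) : Prop :=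
  X ⊆ Iio κ.ord ∧ ∃ C, IsClubIn κ C ∧ X ∩ C = ∅

/-- Membership in the ideal generated by a family `S`. -/
def genIdeal (κ : Cardinal.{0}) (S : Set Ordinal.{0} → Prop) (X : Set Ordinal.{0}) : Prop :=
  ∀ K, IsIdeal κ K → (∀ Y, S Y → K Y) → K X

/-- Membership in the pleasant closure of `S` (smallest pleasant ideal containing `S`). -/
def PClosure (κ : Cardinal.{0}) (S : Set Ordinal.{0} → Prop) (X : Set Ordinal.{0}) : Prop :=
  ∀ K, IsIdeal κ K → Pleasant K → (∀ Y, S Y → K Y) → K X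

/-- Membership in the prepleasant closure of `S`. -/
def PPClosure (κ : Cardinal.{0}) (S : Set Ordinal.{0} → Prop) (X : Set Ordinal.{0}) : Prop :=
  ∀ K, IsIdeal κ K → Prepleasant κ K → (∀ Y, S Y → K Y) → K X

/-- p-point. -/
def PPoint (κ : Cardinal.{0}) (J : Set Ordinal.{0} → Prop) : Prop :=
  ∀ f : Ordinal.{0} → Ordinal.{0}, (∀ ξ : Ordinal.{0}, J {α | α < κ.ord ∧ f α = ξ}) →
    ∃ X, Dual κ J X ∧ ∀ ξ : Ordinal.{0}, BddIn κ {α | α ∈ X ∧ f α = ξ}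

/-- q-point. -/
def QPoint (κ : Cardinal.{0}) (J : Set Ordinal.{0} → Prop) : Prop :=
  ∀ f : Ordinal.{0} → Ordinal.{0}, (∀ ξ : Ordinal.{0}, BddIn κ {α | α < κ.ord ∧ f α = ξ}) →
    ∃ X, Dual κ J X ∧ Set.InjOn f X

/-- `L = {λ + 1 : λ < κ a limit ordinal}`. -/
def LSet (κ : Cardinal.{0}) : Set Ordinal.{0} :=
  {x | ∃ lam : Ordinal.{0}, Order.IsSuccLimit lam ∧ x = lam + 1 ∧ x < κ.ord}

/-- `B(Y) = {α - 1 : α ∈ Y}` for a set `Y` of successor ordinals. -/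
def BSet (Y : Set Ordinal.{0}) : Set Ordinal.{0} := {γ | γ + 1 ∈ Y}

/-- `W = {λ < κ : cof λ = ω}`. -/
def WSet (κ : Cardinal.{0}) : Set Ordinal.{0} :=
  {lam | lam < κ.ord ∧ lam.cof = Cardinal.aleph0}

/-- Węglorz's ideal `J_κ`. -/
def Weglorz (κ : Cardinal.{0}) (X : Set Ordinal.{0}) : Prop :=
  X ⊆ Iio κ.ord ∧ ∃ (f : Ordinal.{0} → Ordinal.{0}) (θ : Cardinal.{0}), θ < κ ∧
    (∀ α ∈ X, α ≠ 0 → f α < α) ∧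
    ∀ ξ : Ordinal.{0}, Cardinal.mk {α : Ordinal.{0} // α ∈ X ∧ f α = ξ} ≤ Cardinal.lift.{1} θ


/-!
Every `A ∈ J` is disjoint from some club `C`. Moving each index `β ∈ A` down to the largest
point `c < β` of `C` turns a diagonal union over `A` into one over `C`, up to a set in `J`,
with strictly smaller indices; quasinormality applied to the new family leaves, again up to a
set in `J`, only the indices in `C \ Q ∈ J`. Repeating this `ω` times, a point of the original
diagonal union outside the countably many discarded sets would carry an infinite decreasing
sequence of indices. So `J` is closed under diagonal unions indexed by sets in `J`, and
splitting `κ` into a set `Q ∈ J*` given by quasinormality and its complement yields normality.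
-/

namespace IsIdeal

variable {κ : Cardinal.{0}} {J : Set Ordinal.{0} → Prop}

lemma mono (hJ : IsIdeal κ J) {X Y : Set Ordinal.{0}} (hX : J X) (hYX : Y ⊆ X) : J Y :=
  hJ.2.1 X Y hX hYX

lemma union (hJ : IsIdeal κ J) {X Y : Set Ordinal.{0}} (hX : J X) (hY : J Y) : J (X ∪ Y) :=
  hJ.2.2.1 X Y hX hY

lemma biUnion_Iio (hJ : IsIdeal κ J) {θ : Ordinal.{0}} (hθ : θ < κ.ord)
    {X : Ordinal.{0} → Set Ordinal.{0}} (hX : ∀ α, J (X α)) : J (⋃ α ∈ Iio θ, X α) :=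
  hJ.2.2.2.2 θ (Cardinal.lt_ord.1 hθ) X hX

lemma iUnion_nat (hJ : IsIdeal κ J) (hunc : Cardinal.aleph0 < κ) {G : ℕ → Set Ordinal.{0}}
    (hG : ∀ n, J (G n)) : J (⋃ n, G n) := by
  refine hJ.mono (hJ.biUnion_Iio (θ := Ordinal.omega0) (X := fun α => G α.card.toNat)
    (by simpa using hunc) fun α => hG _) ?_
  intro ξ hξ
  obtain ⟨n, hn⟩ := mem_iUnion.1 hξ
  exact mem_biUnion (Ordinal.natCast_lt_omega0 n) (by simpa using hn)

end IsIdeal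

namespace IsClubIn

variable {κ : Cardinal.{0}} {C : Set Ordinal.{0}}

lemma mem_of_isLUB (hC : IsClubIn κ C) {S : Set Ordinal.{0}} {a : Ordinal.{0}} (hSC : S ⊆ C)
    (hS : S.Nonempty) (ha : IsLUB S a) (haκ : a < κ.ord) : a ∈ C := by
  by_cases haS : a ∈ S
  · exact hSC haS
  refine hC.2.2 a haκ (ha.isSuccLimit_of_notMem hS haS) fun α hα => ?_
  obtain ⟨e, heS, hαe, hea⟩ := ha.exists_between hα
  exact ⟨e, hSC heS, hαe, hea.lt_of_ne (ne_of_mem_of_not_mem heS haS)⟩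

/-- The least point of `C` above `γ` (junk value `0` if there is none). -/
noncomputable def next (C : Set Ordinal.{0}) (γ : Ordinal.{0}) : Ordinal.{0} := sInf {c ∈ C | γ < c}

lemma next_lt (hC : IsClubIn κ C) (hκ : (0 : Ordinal.{0}) < κ.ord) (γ : Ordinal.{0}) :
    next C γ < κ.ord := by
  rcases {c ∈ C | γ < c}.eq_empty_or_nonempty with h | h
  · simpa [next, h] using hκ
  · exact hC.1 (csInf_mem h).1

lemma exists_lt_lt_next (hC : IsClubIn κ C) {β : Ordinal.{0}} (hβκ : β < κ.ord) (hβC : β ∉ C)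
    (hCβ : sInf C ≤ β) : ∃ c ∈ C, c < β ∧ β < next C c := by
  have hCne : C.Nonempty := let ⟨c, hc, _⟩ := hC.2.1 β hβκ; ⟨c, hc⟩
  set S := C ∩ Iio β
  have hSne : S.Nonempty :=
    ⟨sInf C, csInf_mem hCne, hCβ.lt_of_ne fun h => hβC (h ▸ csInf_mem hCne)⟩
  have hSbdd : BddAbove S := ⟨β, fun x hx => hx.2.le⟩
  have hcβ : sSup S ≤ β := csSup_le hSne fun x hx => hx.2.le
  have hcC : sSup S ∈ C :=
    hC.mem_of_isLUB inter_subset_left hSne (isLUB_csSup hSne hSbdd) (hcβ.trans_lt hβκ)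
  refine ⟨sSup S, hcC, hcβ.lt_of_ne fun h => hβC (h ▸ hcC), ?_⟩
  have hnext : {c ∈ C | sSup S < c}.Nonempty := hC.2.1 _ (hcβ.trans_lt hβκ)
  by_contra! hle
  have hmem : next C (sSup S) ∈ S :=
    ⟨(csInf_mem hnext).1, hle.lt_of_ne fun h => hβC (h ▸ (csInf_mem hnext).1)⟩
  exact (le_csSup hSbdd hmem).not_gt (csInf_mem hnext).2

end IsClubIn

def Descends (A : Set Ordinal.{0}) (X : Ordinal.{0} → Set Ordinal.{0}) (G A' : Set Ordinal.{0})
    (X' : Ordinal.{0} → Set Ordinal.{0}) : Prop :=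
  ∀ ξ β, β ∈ A → β < ξ → ξ ∈ X β → ξ ∉ G → ∃ β' ∈ A', β' < β ∧ ξ ∈ X' β'

lemma diagU_subset_iUnion_of_descends {A G : ℕ → Set Ordinal.{0}}
    {X : ℕ → Ordinal.{0} → Set Ordinal.{0}}
    (h : ∀ n, Descends (A n) (X n) (G n) (A (n + 1)) (X (n + 1))) :
    diagU (A 0) (X 0) ⊆ ⋃ n, G n := by
  rintro ξ ⟨β, hβξ, hβA, hξX⟩
  by_contra hξG
  simp only [mem_iUnion, not_exists] at hξG
  suffices ∀ β n, β ∈ A n → β < ξ → ξ ∈ X n β → False from this β 0 hβA hβξ hξX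
  intro β
  induction β using WellFoundedLT.induction with
  | ind β ih =>
    intro n hβA hβξ hξX
    obtain ⟨β', hβ'A, hβ'β, hξX'⟩ := h n ξ β hβA hβξ hξX (hξG n)
    exact ih β' hβ'β (n + 1) hβ'A (hβ'β.trans hβξ) hξX'

section Quasinormal

variable {κ : Cardinal.{0}} {J : Set Ordinal.{0} → Prop}

lemma IsIdeal.exists_descends (hJ : IsIdeal κ J) (hunc : Cardinal.aleph0 < κ)
    (hsub : ∀ X, J X → NS κ X) (hq : Quasinormal κ J) {A : Set Ordinal.{0}}
    {X : Ordinal.{0} → Set Ordinal.{0}} (hA : J A) (hX : ∀ α, J (X α)) :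
    ∃ (G A' : Set Ordinal.{0}) (X' : Ordinal.{0} → Set Ordinal.{0}),
      J G ∧ J A' ∧ (∀ α, J (X' α)) ∧ Descends A X G A' X' := by
  obtain ⟨-, C, hC, hAC⟩ := hsub A hA
  have hκ : (0 : Ordinal.{0}) < κ.ord := Cardinal.lt_ord.2 (by simpa using hunc.bot_lt)
  set X' : Ordinal.{0} → Set Ordinal.{0} := fun γ => ⋃ β ∈ Iio (IsClubIn.next C γ), X β
  have hX' : ∀ γ, J (X' γ) := fun γ => hJ.biUnion_Iio (hC.next_lt hκ γ) hX
  obtain ⟨Q, ⟨-, hQc⟩, hQdiag⟩ := hq X' hX'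
  have hCne : C.Nonempty := let ⟨c, hc, _⟩ := hC.2.1 0 hκ; ⟨c, hc⟩
  -- `B` catches the witnesses below `min C`, and `diagU Q X'` those moved into `Q`.
  set B := ⋃ β ∈ Iio (sInf C), X β
  refine ⟨B ∪ diagU Q X', C \ Q, X', hJ.union (hJ.biUnion_Iio (hC.1 (csInf_mem hCne)) hX) hQdiag,
    hJ.mono hQc fun c hc => ⟨hC.1 hc.1, hc.2⟩, hX', ?_⟩
  intro ξ β hβA hβξ hξX hξG
  have hβC : β ∉ C := fun h => (hAC.subset ⟨hβA, h⟩ : β ∈ (∅ : Set Ordinal.{0}))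
  have hCβ : sInf C ≤ β := not_lt.1 fun h => hξG (Or.inl (mem_biUnion h hξX))
  obtain ⟨c, hcC, hcβ, hβc⟩ := hC.exists_lt_lt_next (hJ.1 A hA hβA) hβC hCβ
  have hξX' : ξ ∈ X' c := mem_biUnion hβc hξX
  have hcQ : c ∉ Q := fun h => hξG (Or.inr ⟨c, hcβ.trans hβξ, h, hξX'⟩)
  exact ⟨c, ⟨hcC, hcQ⟩, hcβ, hξX'⟩

lemma IsIdeal.pleasant_of_quasinormal (hJ : IsIdeal κ J) (hunc : Cardinal.aleph0 < κ)
    (hsub : ∀ X, J X → NS κ X) (hq : Quasinormal κ J) : Pleasant J := by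
  intro A hA X hX
  let T := {p : Set Ordinal.{0} × (Ordinal.{0} → Set Ordinal.{0}) // J p.1 ∧ ∀ α, J (p.2 α)}
  choose G A' X' hG hA' hX' hdesc using fun t : T => hJ.exists_descends hunc hsub hq t.2.1 t.2.2
  let seq : ℕ → T := fun n => (fun t => ⟨(A' t, X' t), hA' t, hX' t⟩)^[n] ⟨(A, X), hA, hX⟩
  have hseq : ∀ n, seq (n + 1) = ⟨(A' (seq n), X' (seq n)), hA' _, hX' _⟩ :=
    fun n => Function.iterate_succ_apply' _ n _
  refine hJ.mono (hJ.iUnion_nat hunc fun n => hG (seq n)) ?_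
  refine diagU_subset_iUnion_of_descends (A := fun n => (seq n).1.1)
    (X := fun n => (seq n).1.2) fun n => ?_
  simpa only [hseq] using hdesc (seq n)

lemma IsIdeal.normal_of_pleasant (hJ : IsIdeal κ J) (hP : Pleasant J) (hq : Quasinormal κ J) :
    Normal κ J := by
  intro X hX
  obtain ⟨Q, ⟨-, hQc⟩, hQdiag⟩ := hq X hX
  refine hJ.mono (hJ.union hQdiag (hP _ hQc X hX)) ?_
  rintro ξ ⟨α, hαξ, hακ, hξX⟩
  by_cases hαQ : α ∈ Q
  · exact Or.inl ⟨α, hαξ, hαQ, hξX⟩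
  · exact Or.inr ⟨α, hαξ, ⟨hακ, hαQ⟩, hξX⟩

end Quasinormal

theorem stmt10_general (κ : Cardinal.{0}) (hunc : Cardinal.aleph0 < κ)
    (J : Set Ordinal.{0} → Prop) (hJ : IsIdeal κ J)
    (hsub : ∀ X, J X → NS κ X) (hq : Quasinormal κ J) :
    Normal κ J :=
  hJ.normal_of_pleasant (hJ.pleasant_of_quasinormal hunc hsub hq) hq

/-- A quasinormal ideal contained in `NS κ` is normal. -/
theorem stmt10 (κ : Cardinal.{0}) (hreg : κ.IsRegular) (hunc : Cardinal.aleph0 < κ)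
    (J : Set Ordinal.{0} → Prop) (hJ : IsIdeal κ J) (hprop : Proper κ J)
    (hsub : ∀ X, J X → NS κ X) (hq : Quasinormal κ J) :
    Normal κ J :=
  stmt10_general κ hunc J hJ hsub hq

end PaperIdeals
end

section
/- An ideal I on κ is normal if and only if I is pleasant and L = {λ+1 : λ a limit ordinal < κ} ∈ I. -/
open Set

namespace PaperIdeals

open scoped Ordinal

theorem diagU_mono {A B : Set Ordinal.{0}} (hAB : A ⊆ B) (X : Ordinal.{0} → Set Ordinal.{0}) :
    diagU A X ⊆ diagU B X := fun _ ⟨α, hαξ, hαA, hξ⟩ => ⟨α, hαξ, hAB hαA, hξ⟩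

theorem exists_isSuccLimit_le_lt_add_omega0 {α : Ordinal} (hα : ω ≤ α) :
    ∃ lam, Order.IsSuccLimit lam ∧ lam ≤ α ∧ α < lam + ω := by
  have hq : 0 < α / ω := by
    simpa [Ordinal.lt_div Ordinal.omega0_ne_zero] using hα
  refine ⟨ω * (α / ω),
    Ordinal.isSuccLimit_mul_left Ordinal.isSuccLimit_omega0 hq, Ordinal.mul_div_le α _, ?_⟩
  conv_lhs => rw [← Ordinal.div_add_mod α ω]
  exact add_lt_add_right (Ordinal.mod_lt α Ordinal.omega0_ne_zero) _

/-- If `α < ξ` and `λ ≤ α < λ + ω` with `λ` limit, then either `ξ = λ + 1 ∈ L`, or `λ + 1 ∈ L`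
lies below `ξ` and `α < (λ + 1) + ω`. -/
theorem diagU_Iio_subset {κ : Cardinal.{0}} {X : Ordinal.{0} → Set Ordinal.{0}}
    (hX : ∀ α, X α ⊆ Iio κ.ord) :
    diagU (Iio κ.ord) X ⊆ diagU (LSet κ) (fun β => ⋃ γ ∈ Iio (β + ω), X γ) ∪
      LSet κ ∪ ⋃ γ ∈ Iio ω, X γ := by
  rintro ξ ⟨α, hαξ, -, hξX⟩
  have hξκ : ξ < κ.ord := hX α hξX
  rcases lt_or_ge α ω with hα | hα
  · exact Or.inr (mem_biUnion hα hξX)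
  obtain ⟨lam, hlim, hlamα, hαlt⟩ := exists_isSuccLimit_le_lt_add_omega0 hα
  rcases (Order.add_one_le_of_lt (hlamα.trans_lt hαξ)).lt_or_eq with hlt | rfl
  · refine Or.inl (Or.inl ⟨lam + 1, hlt, ⟨lam, hlim, rfl, hlt.trans hξκ⟩, ?_⟩)
    show ξ ∈ ⋃ γ ∈ Iio (lam + 1 + ω), X γ
    rw [add_assoc, Ordinal.one_add_omega0]
    exact mem_biUnion hαlt hξX
  · exact Or.inl (Or.inr ⟨lam, hlim, rfl, hξκ⟩)

section

variable {κ : Cardinal.{0}} {J : Set Ordinal.{0} → Prop}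

namespace IsIdeal

variable (hJ : IsIdeal κ J)
include hJ

theorem subset_Iio {X : Set Ordinal.{0}} (hX : J X) : X ⊆ Iio κ.ord := hJ.1 X hX

theorem mem_of_subset {X Y : Set Ordinal.{0}} (hX : J X) (hYX : Y ⊆ X) : J Y := hJ.2.1 X Y hX hYX

theorem union_mem {X Y : Set Ordinal.{0}} (hX : J X) (hY : J Y) : J (X ∪ Y) := hJ.2.2.1 X Y hX hY

theorem singleton_mem {ξ : Ordinal.{0}} (hξ : ξ < κ.ord) : J {ξ} := hJ.2.2.2.1 ξ hξ

theorem biUnion_mem {θ : Ordinal.{0}} (hθ : θ.card < κ) {X : Ordinal.{0} → Set Ordinal.{0}}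
    (hX : ∀ α, J (X α)) : J (⋃ α ∈ Iio θ, X α) := hJ.2.2.2.2 θ hθ X hX

theorem empty_mem (hκ : κ ≠ 0) : J ∅ :=
  hJ.mem_of_subset (hJ.singleton_mem (Cardinal.ord_pos.2 hκ.bot_lt)) (empty_subset _)

theorem mem_of_subsingleton (hκ : κ ≠ 0) {Y : Set Ordinal.{0}} (hYκ : Y ⊆ Iio κ.ord)
    (hY : Y.Subsingleton) : J Y := by
  obtain rfl | ⟨ξ, rfl⟩ := hY.eq_empty_or_singleton
  · exact hJ.empty_mem hκ
  · exact hJ.singleton_mem (hYκ rfl)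

end IsIdeal

theorem Pleasant.diagU_mem (hJ : IsIdeal κ J) (hκ : κ ≠ 0) (hpl : Pleasant J)
    {A : Set Ordinal.{0}} (hA : J A) {X : Ordinal.{0} → Set Ordinal.{0}} (hX : ∀ α ∈ A, J (X α)) :
    J (diagU A X) := by
  classical
  have hXA : ∀ α, J (if α ∈ A then X α else ∅) := fun α => by
    split_ifs with h
    exacts [hX α h, hJ.empty_mem hκ]
  refine hJ.mem_of_subset (hpl A hA _ hXA) ?_
  rintro ξ ⟨α, hαξ, hαA, hξ⟩
  exact ⟨α, hαξ, hαA, by simpa only [if_pos hαA] using hξ⟩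

theorem Normal.pleasant (hJ : IsIdeal κ J) (hN : Normal κ J) : Pleasant J :=
  fun _ hA X hX => hJ.mem_of_subset (hN X hX) (diagU_mono (hJ.subset_Iio hA) X)

theorem Normal.lSet_mem (hJ : IsIdeal κ J) (hκ : κ ≠ 0) (hN : Normal κ J) : J (LSet κ) := by
  refine hJ.mem_of_subset
    (hN (fun lam => {lam + 1} ∩ Iio κ.ord) fun lam => hJ.mem_of_subsingleton hκ
      inter_subset_right (subsingleton_singleton.anti inter_subset_left)) ?_
  rintro _ ⟨lam, -, rfl, hlt⟩
  exact ⟨lam, lt_add_one lam, (lt_add_one lam).trans hlt, rfl, hlt⟩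

theorem Pleasant.normal (hJ : IsIdeal κ J) (hunc : Cardinal.aleph0 < κ) (hpl : Pleasant J)
    (hL : J (LSet κ)) : Normal κ J := by
  intro X hX
  have hκ : κ ≠ 0 := (Cardinal.aleph0_pos.trans hunc).ne'
  have hblock : ∀ β ∈ LSet κ, J (⋃ γ ∈ Iio (β + ω), X γ) := by
    rintro β ⟨-, -, -, hβ⟩
    refine hJ.biUnion_mem ?_ hX
    rw [Ordinal.card_add, Ordinal.card_omega0]
    exact Cardinal.add_lt_of_lt hunc.le (Cardinal.lt_ord.1 hβ) hunc
  have hfirst : J (⋃ γ ∈ Iio ω, X γ) :=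
    hJ.biUnion_mem (by rwa [Ordinal.card_omega0]) hX
  exact hJ.mem_of_subset
    (hJ.union_mem (hJ.union_mem (hpl.diagU_mem hJ hκ hL hblock) hL) hfirst)
    (diagU_Iio_subset fun α => hJ.subset_Iio (hX α))

end

theorem stmt13_general (κ : Cardinal.{0}) (hunc : Cardinal.aleph0 < κ)
    (J : Set Ordinal.{0} → Prop) (hJ : IsIdeal κ J) :
    Normal κ J ↔ (Pleasant J ∧ J (LSet κ)) :=
  ⟨fun hN => ⟨hN.pleasant hJ, hN.lSet_mem hJ (Cardinal.aleph0_pos.trans hunc).ne'⟩,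
    fun ⟨hpl, hL⟩ => hpl.normal hJ hunc hL⟩

/-- `I` is normal iff `I` is pleasant and `L ∈ I`. -/
theorem stmt13 (κ : Cardinal.{0}) (hreg : κ.IsRegular) (hunc : Cardinal.aleph0 < κ)
    (J : Set Ordinal.{0} → Prop) (hJ : IsIdeal κ J) (hprop : Proper κ J) :
    Normal κ J ↔ (Pleasant J ∧ J (LSet κ)) :=
  stmt13_general κ hunc J hJ

end PaperIdeals
end
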